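/- Every PDLsf[Loop] path formula π is monotone: for all MSCs M over P and Σ and events e, f with e ≤proc f such that ⟦π⟧_M(e) and ⟦π⟧_M(f) are both nonempty, one has min_π(e) ≤proc min_π(f) and max_π(e) ≤proc max_π(f). -/

import Mathlib

set_option maxHeartbeats 1000000

/-! ## Message sequence charts -/

/-- A message sequence chart (MSC) over processes `P` and labels `Lab`.
Events are natural numbers; `E` is the finite nonempty set of events. -/
structure MSC (P : Type) (Lab : Type) where
  /-- the finite set of events -/
  E : Finset ℕ
  nonemptyE : E.Nonempty
  /-- process edges `→` (direct successor on a process) -/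
  proc : ℕ → ℕ → Prop
  /-- message edges `◁` -/
  msg : ℕ → ℕ → Prop
  /-- location (process) of each event -/
  loc : ℕ → P
  /-- label of each event -/
  lab : ℕ → Lab
  proc_mem : ∀ e f, proc e f → e ∈ E ∧ f ∈ E
  msg_mem : ∀ e f, msg e f → e ∈ E ∧ f ∈ E
  proc_loc : ∀ e f, proc e f → loc e = loc f
  msg_loc : ∀ e f, msg e f → loc e ≠ loc f
  /-- on each process, any two events are comparable w.r.t. `→⁺` -/
  proc_total : ∀ e f, e ∈ E → f ∈ E → loc e = loc f →
    e = f ∨ Relation.TransGen proc e f ∨ Relation.TransGen proc f e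
  /-- `→` is the direct-successor (covering) relation of the order `→⁺` -/
  proc_cover : ∀ e f, proc e f →
    ¬ ∃ g, Relation.TransGen proc e g ∧ Relation.TransGen proc g f
  /-- every event belongs to at most one message edge -/
  msg_once : ∀ e f e' f', msg e f → msg e' f' →
    (e = e' ∨ e = f' ∨ f = e' ∨ f = f') → e = e' ∧ f = f'
  /-- FIFO condition -/
  fifo : ∀ e f e' f', msg e f → msg e' f' → loc e = loc e' → loc f = loc f' →
    (Relation.ReflTransGen proc e e' ↔ Relation.ReflTransGen proc f f')
  /-- `→ ∪ ◁` is acyclic -/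
  acyclic : ∀ e, ¬ Relation.TransGen (fun a b => proc a b ∨ msg a b) e e

namespace MSC

variable {P Lab : Type}

/-- `≤proc`, the reflexive transitive closure of `→`. -/
def procLe (M : MSC P Lab) : ℕ → ℕ → Prop := Relation.ReflTransGen M.proc

/-- `<proc`, the transitive closure of `→`. -/
def procLt (M : MSC P Lab) : ℕ → ℕ → Prop := Relation.TransGen M.proc

/-- the happened-before relation `≤ = (→ ∪ ◁)*`. -/
def hb (M : MSC P Lab) : ℕ → ℕ → Prop :=
  Relation.ReflTransGen (fun a b => M.proc a b ∨ M.msg a b)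

/-- Relabelling an MSC (same events and edges, new labelling). -/
def relabel {Γ : Type} (M : MSC P Lab) (γ : ℕ → Γ) : MSC P Γ where
  E := M.E
  nonemptyE := M.nonemptyE
  proc := M.proc
  msg := M.msg
  loc := M.loc
  lab := γ
  proc_mem := M.proc_mem
  msg_mem := M.msg_mem
  proc_loc := M.proc_loc
  msg_loc := M.msg_loc
  proc_total := M.proc_total
  proc_cover := M.proc_cover
  msg_once := M.msg_once
  fifo := M.fifo
  acyclic := M.acyclic

end MSC

/-! ## Star-free PDL -/

mutual
/-- Event formulas of star-free PDL. -/
inductive EF (P Lab : Type) : Type where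
  | proc : P → EF P Lab
  | lab : Lab → EF P Lab
  | or : EF P Lab → EF P Lab → EF P Lab
  | not : EF P Lab → EF P Lab
  | dia : PF P Lab → EF P Lab → EF P Lab
  | loop : PF P Lab → EF P Lab
/-- Path formulas of star-free PDL. -/
inductive PF (P Lab : Type) : Type where
  | next : PF P Lab
  | prev : PF P Lab
  | msg : P → P → PF P Lab
  | msgInv : P → P → PF P Lab
  | nextG : EF P Lab → PF P Lab
  | prevG : EF P Lab → PF P Lab
  | jump : P → P → PF P Lab
  | test : EF P Lab → PF P Lab
  | comp : PF P Lab → PF P Lab → PF P Lab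
  | union : PF P Lab → PF P Lab → PF P Lab
  | inter : PF P Lab → PF P Lab → PF P Lab
  | compl : PF P Lab → PF P Lab
end

mutual
/-- Satisfaction of event formulas at an event. -/
def EF.sat {P Lab : Type} (M : MSC P Lab) : EF P Lab → ℕ → Prop
  | .proc p, e => e ∈ M.E ∧ M.loc e = p
  | .lab a, e => e ∈ M.E ∧ M.lab e = a
  | .or φ ψ, e => EF.sat M φ e ∨ EF.sat M ψ e
  | .not φ, e => e ∈ M.E ∧ ¬ EF.sat M φ e
  | .dia π φ, e => ∃ f, PF.sem M π e f ∧ EF.sat M φ f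
  | .loop π, e => PF.sem M π e e
/-- Semantics of path formulas as binary relations on events. -/
def PF.sem {P Lab : Type} (M : MSC P Lab) : PF P Lab → ℕ → ℕ → Prop
  | .next, e, f => M.proc e f
  | .prev, e, f => M.proc f e
  | .msg p q, e, f => M.msg e f ∧ M.loc e = p ∧ M.loc f = q
  | .msgInv p q, e, f => M.msg f e ∧ M.loc f = p ∧ M.loc e = q
  | .nextG φ, e, f => M.procLt e f ∧ ∀ g, M.procLt e g → M.procLt g f → EF.sat M φ g
  | .prevG φ, e, f => M.procLt f e ∧ ∀ g, M.procLt f g → M.procLt g e → EF.sat M φ g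
  | .jump p r, e, f => e ∈ M.E ∧ f ∈ M.E ∧ M.loc e = p ∧ M.loc f = r
  | .test φ, e, f => e = f ∧ EF.sat M φ e
  | .comp π₁ π₂, e, f => ∃ g, PF.sem M π₁ e g ∧ PF.sem M π₂ g f
  | .union π₁ π₂, e, f => PF.sem M π₁ e f ∨ PF.sem M π₂ e f
  | .inter π₁ π₂, e, f => PF.sem M π₁ e f ∧ PF.sem M π₂ e f
  | .compl π, e, f => e ∈ M.E ∧ f ∈ M.E ∧ ¬ PF.sem M π e f
end

/-- Sentences of star-free PDL. -/
inductive PDLS (P Lab : Type) : Type where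
  | ex : EF P Lab → PDLS P Lab
  | or : PDLS P Lab → PDLS P Lab → PDLS P Lab
  | not : PDLS P Lab → PDLS P Lab

/-- Satisfaction of PDL sentences. -/
def PDLS.sat {P Lab : Type} (M : MSC P Lab) : PDLS P Lab → Prop
  | .ex φ => ∃ e ∈ M.E, EF.sat M φ e
  | .or ξ ζ => PDLS.sat M ξ ∨ PDLS.sat M ζ
  | .not ξ => ¬ PDLS.sat M ξ

/-- The four optional operators of star-free PDL. -/
inductive PDLOp : Type where
  | loop | union | inter | compl
deriving DecidableEq

mutual
/-- `EF.inFrag R φ` : the event formula `φ` belongs to the fragment `PDLsf[R]`. -/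
def EF.inFrag {P Lab : Type} (R : Set PDLOp) : EF P Lab → Prop
  | .proc _ => True
  | .lab _ => True
  | .or φ ψ => EF.inFrag R φ ∧ EF.inFrag R ψ
  | .not φ => EF.inFrag R φ
  | .dia π φ => PF.inFrag R π ∧ EF.inFrag R φ
  | .loop π => PDLOp.loop ∈ R ∧ PF.inFrag R π
/-- `PF.inFrag R π` : the path formula `π` belongs to the fragment `PDLsf[R]`. -/
def PF.inFrag {P Lab : Type} (R : Set PDLOp) : PF P Lab → Prop
  | .next => True
  | .prev => True
  | .msg _ _ => True
  | .msgInv _ _ => True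
  | .nextG φ => EF.inFrag R φ
  | .prevG φ => EF.inFrag R φ
  | .jump _ _ => True
  | .test φ => EF.inFrag R φ
  | .comp π₁ π₂ => PF.inFrag R π₁ ∧ PF.inFrag R π₂
  | .union π₁ π₂ => PDLOp.union ∈ R ∧ PF.inFrag R π₁ ∧ PF.inFrag R π₂
  | .inter π₁ π₂ => PDLOp.inter ∈ R ∧ PF.inFrag R π₁ ∧ PF.inFrag R π₂
  | .compl π => PDLOp.compl ∈ R ∧ PF.inFrag R π
end

/-- `PDLS.inFrag R ξ` : the sentence `ξ` belongs to the fragment `PDLsf[R]`. -/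
def PDLS.inFrag {P Lab : Type} (R : Set PDLOp) : PDLS P Lab → Prop
  | .ex φ => EF.inFrag R φ
  | .or ξ ζ => PDLS.inFrag R ξ ∧ PDLS.inFrag R ζ
  | .not ξ => PDLS.inFrag R ξ

/-- Conjunction of event formulas (derived operator). -/
def EF.and {P Lab : Type} (φ ψ : EF P Lab) : EF P Lab :=
  .not (.or (.not φ) (.not ψ))

/-- `isMinOf M π e m` : `m` is the `≤proc`-least element of `⟦π⟧_M(e)`
(in particular `⟦π⟧_M(e)` is nonempty). -/
def isMinOf {P Lab : Type} (M : MSC P Lab) (π : PF P Lab) (e m : ℕ) : Prop :=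
  PF.sem M π e m ∧ ∀ f, PF.sem M π e f → M.procLe m f

/-- `isMaxOf M π e m` : `m` is the `≤proc`-greatest element of `⟦π⟧_M(e)`
(in particular `⟦π⟧_M(e)` is nonempty). -/
def isMaxOf {P Lab : Type} (M : MSC P Lab) (π : PF P Lab) (e m : ℕ) : Prop :=
  PF.sem M π e m ∧ ∀ f, PF.sem M π e f → M.procLe f m

/-! ## MSO/FO logic over MSCs -/

/-- Formulas of MSO over MSCs: first-order kernel with atoms `p(x)`, `a(x)`,
`x = y`, `x → y`, `x ◁ y`, `x ≤ y` and additionally `x ∈ X_k` (monadic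
second-order variables, used for the EMSO prefix). -/
inductive FOS (P Lab : Type) : Type where
  | pred : P → ℕ → FOS P Lab
  | lab : Lab → ℕ → FOS P Lab
  | eq : ℕ → ℕ → FOS P Lab
  | edge : ℕ → ℕ → FOS P Lab
  | medge : ℕ → ℕ → FOS P Lab
  | le : ℕ → ℕ → FOS P Lab
  | inSet : ℕ → ℕ → FOS P Lab
  | or : FOS P Lab → FOS P Lab → FOS P Lab
  | not : FOS P Lab → FOS P Lab
  | ex : ℕ → FOS P Lab → FOS P Lab

/-- Satisfaction, with a first-order valuation `ν` and a second-order valuation `σ`.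
First-order quantification ranges over the events of the MSC. -/
def FOS.sat {P Lab : Type} (M : MSC P Lab) : FOS P Lab → (ℕ → ℕ) → (ℕ → Set ℕ) → Prop
  | .pred p x, ν, _ => M.loc (ν x) = p
  | .lab a x, ν, _ => M.lab (ν x) = a
  | .eq x y, ν, _ => ν x = ν y
  | .edge x y, ν, _ => M.proc (ν x) (ν y)
  | .medge x y, ν, _ => M.msg (ν x) (ν y)
  | .le x y, ν, _ => M.hb (ν x) (ν y)
  | .inSet x k, ν, σ => ν x ∈ σ k
  | .or Φ Ψ, ν, σ => FOS.sat M Φ ν σ ∨ FOS.sat M Ψ ν σ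
  | .not Φ, ν, σ => ¬ FOS.sat M Φ ν σ
  | .ex x Φ, ν, σ => ∃ e ∈ M.E, FOS.sat M Φ (Function.update ν x e) σ

/-- Free first-order variables. -/
def FOS.free {P Lab : Type} : FOS P Lab → Finset ℕ
  | .pred _ x => {x}
  | .lab _ x => {x}
  | .eq x y => {x, y}
  | .edge x y => {x, y}
  | .medge x y => {x, y}
  | .le x y => {x, y}
  | .inSet x _ => {x}
  | .or Φ Ψ => FOS.free Φ ∪ FOS.free Ψ
  | .not Φ => FOS.free Φ
  | .ex x Φ => (FOS.free Φ).erase x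

/-- All first-order variables occurring (free or bound). -/
def FOS.vars {P Lab : Type} : FOS P Lab → Finset ℕ
  | .pred _ x => {x}
  | .lab _ x => {x}
  | .eq x y => {x, y}
  | .edge x y => {x, y}
  | .medge x y => {x, y}
  | .le x y => {x, y}
  | .inSet x _ => {x}
  | .or Φ Ψ => FOS.vars Φ ∪ FOS.vars Ψ
  | .not Φ => FOS.vars Φ
  | .ex x Φ => insert x (FOS.vars Φ)

/-- A formula is first-order (`FO[→,◁,≤]`) iff it contains no set atoms. -/
def FOS.noSets {P Lab : Type} : FOS P Lab → Prop
  | .pred _ _ => True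
  | .lab _ _ => True
  | .eq _ _ => True
  | .edge _ _ => True
  | .medge _ _ => True
  | .le _ _ => True
  | .inSet _ _ => False
  | .or Φ Ψ => FOS.noSets Φ ∧ FOS.noSets Ψ
  | .not Φ => FOS.noSets Φ
  | .ex _ Φ => FOS.noSets Φ

/-! ## Communicating finite-state machines -/

/-- Actions of a process: internal `⟨a⟩`, send `!(a,m,q)`, receive `?(a,m,q)`. -/
inductive CAct (P Lab Msg : Type) : Type where
  | int : Lab → CAct P Lab Msg
  | snd : Lab → Msg → P → CAct P Lab Msg
  | rcv : Lab → Msg → P → CAct P Lab Msg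

/-- The label performed by an action. -/
def CAct.label {P Lab Msg : Type} : CAct P Lab Msg → Lab
  | .int a => a
  | .snd a _ _ => a
  | .rcv a _ _ => a

/-- A communicating finite-state machine over `P` and `Lab`. -/
structure CFM (P Lab : Type) where
  /-- states -/
  S : Type
  finS : Fintype S
  /-- messages -/
  Msg : Type
  finMsg : Fintype Msg
  /-- initial state of each process -/
  ι : P → S
  /-- transition relation of each process -/
  Δ : P → S → CAct P Lab Msg → S → Prop
  Δ_snd : ∀ p s a m q s', Δ p s (.snd a m q) s' → q ≠ p
  Δ_rcv : ∀ p s a m q s', Δ p s (.rcv a m q) s' → q ≠ p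
  /-- acceptance condition -/
  Acc : (P → S) → Prop

/-- Existence of an accepting run of a CFM on an MSC. -/
def CFM.Accepts {P Lab : Type} (A : CFM P Lab) (M : MSC P Lab) : Prop :=
  ∃ (src tgt : ℕ → A.S) (act : ℕ → CAct P Lab A.Msg),
    (∀ e ∈ M.E, A.Δ (M.loc e) (src e) (act e) (tgt e)) ∧
    (∀ e ∈ M.E, (act e).label = M.lab e) ∧
    (∀ e ∈ M.E, (¬ ∃ f, M.proc f e) → src e = A.ι (M.loc e)) ∧
    (∀ e f, M.proc e f → tgt e = src f) ∧
    (∀ e ∈ M.E, (¬ ∃ f, M.msg e f) → (¬ ∃ f, M.msg f e) → ∃ a, act e = .int a) ∧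
    (∀ e f, M.msg e f →
      ∃ a a' m, act e = .snd a m (M.loc f) ∧ act f = .rcv a' m (M.loc e)) ∧
    (∃ fin : P → A.S,
      (∀ p, (∀ e ∈ M.E, M.loc e ≠ p) → fin p = A.ι p) ∧
      (∀ e ∈ M.E, (¬ ∃ f, M.proc e f) → fin (M.loc e) = tgt e) ∧
      A.Acc fin)

/-- The language of a CFM. -/
def CFM.lang {P Lab : Type} (A : CFM P Lab) : Set (MSC P Lab) := {M | A.Accepts M}

/-! ## Letter-to-letter MSC transducers -/

/-- The relation accepted by a letter-to-letter MSC transducer from `Lab` to `Γ`,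
i.e., a CFM over `P` and `Lab × Γ`. -/
def Ltrans {P Lab Γ : Type} (A : CFM P (Lab × Γ)) (M : MSC P Lab) (N : MSC P Γ) : Prop :=
  ∃ γ : ℕ → Γ, N = M.relabel γ ∧ A.Accepts (M.relabel fun e => (M.lab e, γ e))

/-- `M_φ` : the MSC over `Bool` obtained from `M` by labelling each event with
the truth value of the event formula `φ`. -/
noncomputable def MSC.evalEF {P Lab : Type} (M : MSC P Lab) (φ : EF P Lab) : MSC P Bool :=
  M.relabel fun e => @ite Bool (EF.sat M φ e) (Classical.propDecidable _) true false

/-! ## Boolean combinations -/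

/-- Boolean combinations over atoms of type `α`. -/
inductive BC (α : Type) : Type where
  | atom : α → BC α
  | or : BC α → BC α → BC α
  | not : BC α → BC α

/-- Evaluation of a boolean combination given truth values of the atoms. -/
def BC.eval {α : Type} (v : α → Prop) : BC α → Prop
  | .atom a => v a
  | .or b c => BC.eval v b ∨ BC.eval v c
  | .not b => ¬ BC.eval v b

/-- The atoms occurring in a boolean combination. -/
def BC.atoms {α : Type} : BC α → Set α
  | .atom a => {a}
  | .or b c => BC.atoms b ∪ BC.atoms c
  | .not b => BC.atoms b

/-! ## Bounded MSCs -/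

/-- `r` is a linearization of `M`: a total order on the events containing
the happened-before relation. -/
def IsLinearization {P Lab : Type} (M : MSC P Lab) (r : ℕ → ℕ → Prop) : Prop :=
  (∀ e ∈ M.E, r e e) ∧
  (∀ e ∈ M.E, ∀ f ∈ M.E, r e f → r f e → e = f) ∧
  (∀ e ∈ M.E, ∀ f ∈ M.E, ∀ g ∈ M.E, r e f → r f g → r e g) ∧
  (∀ e ∈ M.E, ∀ f ∈ M.E, r e f ∨ r f e) ∧
  (∀ e ∈ M.E, ∀ f ∈ M.E, M.hb e f → r e f)

/-- `r` is a `B`-bounded linearization of `M`: at any point, each channel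
contains at most `B` pending messages. -/
def IsBBoundedLin {P Lab : Type} (M : MSC P Lab) (r : ℕ → ℕ → Prop) (B : ℕ) : Prop :=
  IsLinearization M r ∧
  ∀ g ∈ M.E, ∀ p q : P, p ≠ q →
    Set.ncard {ef : ℕ × ℕ | M.msg ef.1 ef.2 ∧ M.loc ef.1 = p ∧ M.loc ef.2 = q ∧
      r ef.1 g ∧ ¬ r ef.2 g} ≤ B

/-- `M` is `∃B`-bounded: some linearization of `M` is `B`-bounded. -/
def ExistsBBounded {P Lab : Type} (M : MSC P Lab) (B : ℕ) : Prop :=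
  ∃ r : ℕ → ℕ → Prop, IsBBoundedLin M r B

/-- `g` is a send event on channel `(p,q)`. -/
def isSendOn {P Lab : Type} (M : MSC P Lab) (p q : P) (g : ℕ) : Prop :=
  M.loc g = p ∧ ∃ h, M.msg g h ∧ M.loc h = q

/-- `revB M B f g` : `f` is a receive event with matching send `e` on some
channel `(p,q)`, and `g` is the `B`-th send on channel `(p,q)` strictly after `e`. -/
def revB {P Lab : Type} (M : MSC P Lab) (B : ℕ) (f g : ℕ) : Prop :=
  ∃ e, M.msg e f ∧ isSendOn M (M.loc e) (M.loc f) g ∧ M.procLt e g ∧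
    Set.ncard {g' | isSendOn M (M.loc e) (M.loc f) g' ∧ M.procLt e g' ∧ M.procLe g' g} = B

/-- `≤_B = (≤ ∪ rev_B)*`. -/
def leB {P Lab : Type} (M : MSC P Lab) (B : ℕ) : ℕ → ℕ → Prop :=
  Relation.ReflTransGen (fun a b => (M.proc a b ∨ M.msg a b) ∨ revB M B a b)

/-- `<_B`, the strict part of `≤_B`. -/
def ltB {P Lab : Type} (M : MSC P Lab) (B : ℕ) (e f : ℕ) : Prop :=
  leB M B e f ∧ ¬ leB M B f e

/-- `e ∥_B f` : incomparable w.r.t. `≤_B`. -/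
def parB {P Lab : Type} (M : MSC P Lab) (B : ℕ) (e f : ℕ) : Prop :=
  ¬ leB M B e f ∧ ¬ leB M B f e

/-- `↑_B e = {g : e ≤_B g}`. -/
def upB {P Lab : Type} (M : MSC P Lab) (B : ℕ) (e : ℕ) : Set ℕ :=
  {g | leB M B e g}

/-- The order `≺_B` (w.r.t. a fixed total order on `P`): `e ≺_B f` iff `e <_B f`, or
`e ∥_B f` and the `⊑`-minimum of `loc(↑_B e \ ↑_B f)` is strictly below the
`⊑`-minimum of `loc(↑_B f \ ↑_B e)`. -/
def precB {P Lab : Type} [LinearOrder P] (M : MSC P Lab) (B : ℕ) (e f : ℕ) : Prop :=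
  ltB M B e f ∨
    (parB M B e f ∧ ∃ p ∈ M.loc '' (upB M B e \ upB M B f),
      ∀ q ∈ M.loc '' (upB M B f \ upB M B e), p < q)

/- Proof idea: by induction on a `PDLsf[Loop]` path formula `π`, two `π`-edges `e ⟶ x` and
`f ⟶ y` leaving the same process with `e ≤proc f` end on a common process, and they can never
cross: if `y <proc x`, then also `e ⟶ y` and `f ⟶ x` are `π`-edges. For the atomic formulas
a crossing is impossible (covering property of `→`, FIFO, tests) or harmless (`→_φ`, `←_φ`,
jumps); for `π₁ · π₂` one compares the intermediate events and applies the induction hypothesis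
to `π₂` or, if the `π₁`-edges cross, swaps them. Since `⟦π⟧(e)` is a finite chain, its least and
greatest elements exist, and non-crossing is exactly monotonicity of both. -/

open Relation

namespace MSC

variable {P Lab : Type} (M : MSC P Lab)

lemma loc_eq_of_procLe {e f : ℕ} (h : M.procLe e f) : M.loc e = M.loc f := by
  induction h with
  | refl => rfl
  | tail _ hstep ih => exact ih.trans (M.proc_loc _ _ hstep)

lemma loc_eq_of_procLt {e f : ℕ} (h : M.procLt e f) : M.loc e = M.loc f :=
  M.loc_eq_of_procLe h.to_reflTransGen

lemma procLt_irrefl (e : ℕ) : ¬ M.procLt e e := fun h =>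
  M.acyclic e (Relation.TransGen.mono (fun _ _ => Or.inl) _ _ h)

lemma mem_of_procLt {e f : ℕ} (h : M.procLt e f) : e ∈ M.E ∧ f ∈ M.E := by
  induction h with
  | single hstep => exact M.proc_mem _ _ hstep
  | tail _ hstep ih => exact ⟨ih.1, (M.proc_mem _ _ hstep).2⟩

lemma procLe_or_procLt_of_loc_eq {x y : ℕ} (hx : x ∈ M.E) (hy : y ∈ M.E)
    (hloc : M.loc x = M.loc y) : M.procLe x y ∨ M.procLt y x := by
  rcases M.proc_total x y hx hy hloc with rfl | hxy | hyx
  · exact Or.inl ReflTransGen.refl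
  · exact Or.inl hxy.to_reflTransGen
  · exact Or.inr hyx

lemma procLe_total_of_loc_eq {x y : ℕ} (hx : x ∈ M.E) (hy : y ∈ M.E)
    (hloc : M.loc x = M.loc y) : M.procLe x y ∨ M.procLe y x :=
  (M.procLe_or_procLt_of_loc_eq hx hy hloc).imp_right TransGen.to_reflTransGen

end MSC

theorem Finset.exists_forall_rel_of_total {α : Type*} {r : α → α → Prop} [IsTrans α r]
    {s : Finset α} (hs : s.Nonempty) (htot : ∀ x ∈ s, ∀ y ∈ s, r x y ∨ r y x) :
    ∃ m ∈ s, ∀ x ∈ s, r x m := by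
  have hrefl : ∀ x ∈ s, r x x := fun x hx => (htot x hx x hx).elim id id
  induction hs using Finset.Nonempty.cons_induction with
  | singleton a =>
    refine ⟨a, mem_singleton_self a, fun x hx => ?_⟩
    exact mem_singleton.1 hx ▸ hrefl a (mem_singleton_self a)
  | cons a s _ _ ih =>
    obtain ⟨m, hm, hmax⟩ := ih
      (fun x hx y hy => htot x (mem_cons_of_mem hx) y (mem_cons_of_mem hy))
      (fun x hx => hrefl x (mem_cons_of_mem hx))
    rcases htot a (mem_cons_self a s) m (mem_cons_of_mem hm) with ham | hma
    · exact ⟨m, mem_cons_of_mem hm, fun x hx => (mem_cons.1 hx).elim (· ▸ ham) (hmax x)⟩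
    · refine ⟨a, mem_cons_self a s, fun x hx => (mem_cons.1 hx).elim ?_ ?_⟩
      · exact (· ▸ hrefl a (mem_cons_self a s))
      · exact fun hxs => _root_.trans (hmax x hxs) hma

mutual

theorem EF.sat_mem {P Lab : Type} (M : MSC P Lab) :
    ∀ (φ : EF P Lab) (e : ℕ), EF.sat M φ e → e ∈ M.E
  | .proc _, _, h => h.1
  | .lab _, _, h => h.1
  | .or φ ψ, e, h => h.elim (EF.sat_mem M φ e) (EF.sat_mem M ψ e)
  | .not _, _, h => h.1
  | .dia π _, e, ⟨f, hπ, _⟩ => (PF.sem_mem M π e f hπ).1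
  | .loop π, e, h => (PF.sem_mem M π e e h).1

theorem PF.sem_mem {P Lab : Type} (M : MSC P Lab) :
    ∀ (π : PF P Lab) (e f : ℕ), PF.sem M π e f → e ∈ M.E ∧ f ∈ M.E
  | .next, e, f, h => M.proc_mem e f h
  | .prev, e, f, h => (M.proc_mem f e h).symm
  | .msg _ _, e, f, h => M.msg_mem e f h.1
  | .msgInv _ _, e, f, h => (M.msg_mem f e h.1).symm
  | .nextG _, _, _, h => M.mem_of_procLt h.1
  | .prevG _, _, _, h => (M.mem_of_procLt h.1).symm
  | .jump _ _, _, _, h => ⟨h.1, h.2.1⟩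
  | .test φ, e, _, ⟨rfl, h⟩ => ⟨EF.sat_mem M φ e h, EF.sat_mem M φ e h⟩
  | .comp π₁ π₂, e, f, ⟨g, h₁, h₂⟩ => ⟨(PF.sem_mem M π₁ e g h₁).1, (PF.sem_mem M π₂ g f h₂).2⟩
  | .union π₁ π₂, e, f, h => h.elim (PF.sem_mem M π₁ e f) (PF.sem_mem M π₂ e f)
  | .inter π₁ _, e, f, h => PF.sem_mem M π₁ e f h.1
  | .compl _, _, _, h => ⟨h.1, h.2.1⟩

end

namespace PF

variable {P Lab : Type} {M : MSC P Lab}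

theorem loc_eq_of_sem {π : PF P Lab} (hπ : π.inFrag {PDLOp.loop}) {e f x y : ℕ}
    (hef : M.procLe e f) (hx : π.sem M e x) (hy : π.sem M f y) : M.loc x = M.loc y := by
  have hloc := M.loc_eq_of_procLe hef
  match π, hπ, hx, hy with
  | .next, _, hx, hy => exact (M.proc_loc _ _ hx).symm.trans (hloc.trans (M.proc_loc _ _ hy))
  | .prev, _, hx, hy => exact (M.proc_loc _ _ hx).trans (hloc.trans (M.proc_loc _ _ hy).symm)
  | .msg _ _, _, hx, hy => exact hx.2.2.trans hy.2.2.symm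
  | .msgInv _ _, _, hx, hy => exact hx.2.1.trans hy.2.1.symm
  | .nextG _, _, hx, hy =>
    exact (M.loc_eq_of_procLt hx.1).symm.trans (hloc.trans (M.loc_eq_of_procLt hy.1))
  | .prevG _, _, hx, hy =>
    exact (M.loc_eq_of_procLt hx.1).trans (hloc.trans (M.loc_eq_of_procLt hy.1).symm)
  | .jump _ _, _, hx, hy => exact hx.2.2.2.trans hy.2.2.2.symm
  | .test _, _, hx, hy => exact hx.1 ▸ hy.1 ▸ hloc
  | .comp π₁ π₂, hπ, ⟨g, hg, hgx⟩, ⟨g', hg', hg'y⟩ =>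
    rcases M.procLe_or_procLt_of_loc_eq (sem_mem M π₁ e g hg).2 (sem_mem M π₁ f g' hg').2
      (loc_eq_of_sem hπ.1 hef hg hg') with hgg' | hg'g
    · exact loc_eq_of_sem hπ.2 hgg' hgx hg'y
    · exact (loc_eq_of_sem hπ.2 hg'g.to_reflTransGen hg'y hgx).symm
  | .union _ _, hπ, _, _ => nomatch hπ.1
  | .inter _ _, hπ, _, _ => nomatch hπ.1
  | .compl _, hπ, _, _ => nomatch hπ.1

theorem sem_swap_of_crossing {π : PF P Lab} (hπ : π.inFrag {PDLOp.loop}) {e f x y : ℕ}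
    (hef : M.procLe e f) (hx : π.sem M e x) (hy : π.sem M f y) (hyx : M.procLt y x) :
    π.sem M e y ∧ π.sem M f x := by
  match π, hπ, hx, hy with
  | .next, _, hx, hy => exact absurd ⟨y, TransGen.tail' hef hy, hyx⟩ (M.proc_cover e x hx)
  | .prev, _, hx, hy =>
    exact absurd ⟨x, hyx, TransGen.trans_left (.single hx) hef⟩ (M.proc_cover y f hy)
  | .msg _ _, _, hx, hy =>
    have hfifo := M.fifo e x f y hx.1 hy.1 (hx.2.1.trans hy.2.1.symm) (hx.2.2.trans hy.2.2.symm)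
    exact absurd (TransGen.trans_left hyx (hfifo.1 hef)) (M.procLt_irrefl y)
  | .msgInv _ _, _, hx, hy =>
    have hfifo := M.fifo x e y f hx.1 hy.1 (hx.2.1.trans hy.2.1.symm) (hx.2.2.trans hy.2.2.symm)
    exact absurd (TransGen.trans_left hyx (hfifo.2 hef)) (M.procLt_irrefl y)
  | .nextG _, _, hx, hy =>
    exact ⟨⟨TransGen.trans_right hef hy.1, fun g heg hgy => hx.2 g heg (hgy.trans hyx)⟩,
      ⟨hy.1.trans hyx, fun g hfg hgx => hx.2 g (TransGen.trans_right hef hfg) hgx⟩⟩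
  | .prevG _, _, hx, hy =>
    exact ⟨⟨hyx.trans hx.1, fun g hyg hge => hy.2 g hyg (TransGen.trans_left hge hef)⟩,
      ⟨TransGen.trans_left hx.1 hef, fun g hxg hgf => hy.2 g (hyx.trans hxg) hgf⟩⟩
  | .jump _ _, _, hx, hy =>
    exact ⟨⟨hx.1, hy.2.1, hx.2.2.1, hy.2.2.2⟩, ⟨hy.1, hx.2.1, hy.2.2.1, hx.2.2.2⟩⟩
  | .test _, _, hx, hy =>
    exact absurd (TransGen.trans_left (hy.1 ▸ hx.1 ▸ hyx) hef) (M.procLt_irrefl f)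
  | .comp π₁ π₂, hπ, ⟨g, hg, hgx⟩, ⟨g', hg', hg'y⟩ =>
    rcases M.procLe_or_procLt_of_loc_eq (sem_mem M π₁ e g hg).2 (sem_mem M π₁ f g' hg').2
      (loc_eq_of_sem hπ.1 hef hg hg') with hgg' | hg'g
    · obtain ⟨hgy, hg'x⟩ := sem_swap_of_crossing hπ.2 hgg' hgx hg'y hyx
      exact ⟨⟨g, hg, hgy⟩, ⟨g', hg', hg'x⟩⟩
    · obtain ⟨heg', hfg⟩ := sem_swap_of_crossing hπ.1 hef hg hg' hg'g
      exact ⟨⟨g', heg', hg'y⟩, ⟨g, hfg, hgx⟩⟩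
  | .union _ _, hπ, _, _ => nomatch hπ.1
  | .inter _ _, hπ, _, _ => nomatch hπ.1
  | .compl _, hπ, _, _ => nomatch hπ.1

theorem exists_isMinOf_and_isMaxOf {π : PF P Lab} (hπ : π.inFrag {PDLOp.loop}) {e : ℕ}
    (hne : ∃ x, π.sem M e x) : (∃ m, isMinOf M π e m) ∧ (∃ m, isMaxOf M π e m) := by
  classical
  obtain ⟨x, hx⟩ := hne
  set s := M.E.filter (π.sem M e)
  have hmem : ∀ y, y ∈ s ↔ π.sem M e y := fun y =>
    Finset.mem_filter.trans (and_iff_right_of_imp fun hy => (sem_mem M π e y hy).2)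
  have htot : ∀ y ∈ s, ∀ z ∈ s, M.procLe y z ∨ M.procLe z y := fun y hy z hz =>
    M.procLe_total_of_loc_eq (Finset.mem_filter.1 hy).1 (Finset.mem_filter.1 hz).1
      (loc_eq_of_sem hπ .refl ((hmem y).1 hy) ((hmem z).1 hz))
  have hs : s.Nonempty := ⟨x, (hmem x).2 hx⟩
  have : IsTrans ℕ M.procLe := ⟨fun _ _ _ => ReflTransGen.trans⟩
  obtain ⟨m, hm, hmin⟩ := Finset.exists_forall_rel_of_total (r := Function.swap M.procLe) hs
    fun y hy z hz => htot z hz y hy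
  obtain ⟨m', hm', hmax⟩ := Finset.exists_forall_rel_of_total (r := M.procLe) hs htot
  exact ⟨⟨m, (hmem m).1 hm, fun y hy => hmin y ((hmem y).2 hy)⟩,
    ⟨m', (hmem m').1 hm', fun y hy => hmax y ((hmem y).2 hy)⟩⟩

theorem procLe_of_isMinOf {π : PF P Lab} (hπ : π.inFrag {PDLOp.loop}) {e f me mf : ℕ}
    (hef : M.procLe e f) (hme : isMinOf M π e me) (hmf : isMinOf M π f mf) : M.procLe me mf :=
  (M.procLe_or_procLt_of_loc_eq (sem_mem M π e me hme.1).2 (sem_mem M π f mf hmf.1).2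
    (loc_eq_of_sem hπ hef hme.1 hmf.1)).elim id
    fun hlt => hme.2 mf (sem_swap_of_crossing hπ hef hme.1 hmf.1 hlt).1

theorem procLe_of_isMaxOf {π : PF P Lab} (hπ : π.inFrag {PDLOp.loop}) {e f me mf : ℕ}
    (hef : M.procLe e f) (hme : isMaxOf M π e me) (hmf : isMaxOf M π f mf) : M.procLe me mf :=
  (M.procLe_or_procLt_of_loc_eq (sem_mem M π e me hme.1).2 (sem_mem M π f mf hmf.1).2
    (loc_eq_of_sem hπ hef hme.1 hmf.1)).elim id
    fun hlt => hmf.2 me (sem_swap_of_crossing hπ hef hme.1 hmf.1 hlt).2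

end PF

/-- Every `PDLsf[Loop]` path formula is monotone: for events
`e ≤proc f` on which `⟦π⟧` is nonempty, the minima and maxima exist and satisfy
`min_π(e) ≤proc min_π(f)` and `max_π(e) ≤proc max_π(f)`. -/
theorem pdlsf_loop_monotone {P Lab : Type}
    [Fintype P] [Nonempty P] [Fintype Lab] [Nonempty Lab]
    (π : PF P Lab) (hπ : PF.inFrag {PDLOp.loop} π)
    (M : MSC P Lab) (e f : ℕ) (hef : M.procLe e f)
    (he : ∃ g, PF.sem M π e g) (hf : ∃ g, PF.sem M π f g) :
    (∃ me, isMinOf M π e me) ∧ (∃ mf, isMinOf M π f mf) ∧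
    (∃ me, isMaxOf M π e me) ∧ (∃ mf, isMaxOf M π f mf) ∧
    (∀ me mf, isMinOf M π e me → isMinOf M π f mf → M.procLe me mf) ∧
    (∀ me mf, isMaxOf M π e me → isMaxOf M π f mf → M.procLe me mf) := by
  obtain ⟨hmin_e, hmax_e⟩ := PF.exists_isMinOf_and_isMaxOf hπ he
  obtain ⟨hmin_f, hmax_f⟩ := PF.exists_isMinOf_and_isMaxOf hπ hf
  exact ⟨hmin_e, hmin_f, hmax_e, hmax_f, fun _ _ => PF.procLe_of_isMinOf hπ hef,
    fun _ _ => PF.procLe_of_isMaxOf hπ hef⟩
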